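/- Under the hypotheses of the previous statement, if q̂_α denotes the empirical (1−α)-quantile of (ζ̂_t : t ≤ T), then F(q̂_α) → 1−α in probability as T → ∞. -/

import Mathlib

/-!
By the strong law of large numbers the empirical cdf of the `ζ t` converges to the true cdf `G`
at every point. On the event `|ζhat T t - ζ t| ≤ s` for all `t < T`, the empirical cdf of the
`ζhat T t` at `z` is squeezed between those of the `ζ t` at `z ∓ s`, so by continuity of `G` it
also converges to `G z` in probability; no uniform (Glivenko–Cantelli) convergence is needed.
Fix `a`, `b` with `G a < 1 - α < G b`. If `G q̂ < G a` then `q̂ < a`, so the empirical cdf at `a`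
is at least `1 - α`; if `G q̂ > G b` then `q̂ > b`, so the empirical cdf at `b` is below `1 - α`.
Either way the empirical cdf is far from `G` at one of the two fixed points `a`, `b`.
-/

open MeasureTheory Finset Filter Topology

noncomputable def empiricalCDF (T : ℕ) (x : ℕ → ℝ) (z : ℝ) : ℝ :=
  (∑ t ∈ range T, if x t ≤ z then (1 : ℝ) else 0) / T

noncomputable def empiricalQuantile (T : ℕ) (x : ℕ → ℝ) (p : ℝ) : ℝ :=
  sInf {z | p ≤ empiricalCDF T x z}

section EmpiricalCDF

variable {T : ℕ} {x y : ℕ → ℝ} {p z w : ℝ}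

lemma empiricalCDF_le_empiricalCDF (h : ∀ t < T, x t ≤ z → y t ≤ w) :
    empiricalCDF T x z ≤ empiricalCDF T y w := by
  refine div_le_div_of_nonneg_right (sum_le_sum fun t ht => ?_) T.cast_nonneg
  by_cases hxt : x t ≤ z
  · rw [if_pos hxt, if_pos (h t (mem_range.1 ht) hxt)]
  · rw [if_neg hxt]
    split_ifs <;> norm_num

lemma monotone_empiricalCDF : Monotone (empiricalCDF T x) := fun _ _ hzw =>
  empiricalCDF_le_empiricalCDF fun _ _ hxt => hxt.trans hzw

lemma empiricalCDF_eq_zero (h : ∀ t < T, z < x t) : empiricalCDF T x z = 0 := by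
  rw [empiricalCDF, sum_eq_zero fun t ht => if_neg (h t (mem_range.1 ht)).not_ge, zero_div]

lemma empiricalCDF_eq_one (hT : T ≠ 0) (h : ∀ t < T, x t ≤ z) : empiricalCDF T x z = 1 := by
  rw [empiricalCDF, sum_congr rfl fun t ht => if_pos (h t (mem_range.1 ht))]
  simp [hT]

lemma nonempty_setOf_le_empiricalCDF (hT : T ≠ 0) (hp : p ≤ 1) :
    {z | p ≤ empiricalCDF T x z}.Nonempty := by
  obtain ⟨M, hM⟩ := ((Set.finite_Iio T).image x).bddAbove
  refine ⟨M, show p ≤ empiricalCDF T x M from ?_⟩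
  rwa [empiricalCDF_eq_one hT fun t ht => hM ⟨t, ht, rfl⟩]

lemma bddBelow_setOf_le_empiricalCDF (hp : 0 < p) : BddBelow {z | p ≤ empiricalCDF T x z} := by
  obtain ⟨m, hm⟩ := ((Set.finite_Iio T).image x).bddBelow
  refine ⟨m, fun z hz => le_of_not_gt fun hzm => ?_⟩
  have hzero := empiricalCDF_eq_zero fun t ht => hzm.trans_le (hm ⟨t, ht, rfl⟩)
  exact (hp.trans_le hz).ne' hzero

lemma empiricalCDF_lt_of_lt_empiricalQuantile (hp : 0 < p) (hz : z < empiricalQuantile T x p) :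
    empiricalCDF T x z < p :=
  lt_of_not_ge fun hzS => (csInf_le (bddBelow_setOf_le_empiricalCDF hp) hzS).not_gt hz

lemma le_empiricalCDF_of_empiricalQuantile_lt (hT : T ≠ 0) (hp : p ≤ 1)
    (hz : empiricalQuantile T x p < z) : p ≤ empiricalCDF T x z := by
  obtain ⟨w, hw, hwz⟩ := exists_lt_of_csInf_lt (nonempty_setOf_le_empiricalCDF hT hp) hz
  exact hw.trans (monotone_empiricalCDF hwz.le)

end EmpiricalCDF

section Probability

open ProbabilityTheory

variable {Ω ι : Type*} [MeasurableSpace Ω] {μ : Measure Ω}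

lemma tendsto_measure_of_eventually_subset {l : Filter ι} {A B : ι → Set Ω}
    (hB : Tendsto (fun i => μ (B i)) l (𝓝 0)) (hAB : ∀ᶠ i in l, A i ⊆ B i) :
    Tendsto (fun i => μ (A i)) l (𝓝 0) :=
  tendsto_of_tendsto_of_tendsto_of_le_of_le' tendsto_const_nhds hB
    (.of_forall fun _ => zero_le) (hAB.mono fun _ hi => measure_mono hi)

lemma tendsto_measure_union {l : Filter ι} {A B : ι → Set Ω}
    (hA : Tendsto (fun i => μ (A i)) l (𝓝 0)) (hB : Tendsto (fun i => μ (B i)) l (𝓝 0)) :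
    Tendsto (fun i => μ (A i ∪ B i)) l (𝓝 0) :=
  tendsto_of_tendsto_of_tendsto_of_le_of_le tendsto_const_nhds (by simpa using hA.add hB)
    (fun _ => zero_le) fun _ => measure_union_le _ _

lemma identDistrib_of_measure_setOf_le_eq [IsFiniteMeasure μ] {X Y : Ω → ℝ}
    (hX : Measurable X) (hY : Measurable Y) (h : ∀ z, μ {ω | X ω ≤ z} = μ {ω | Y ω ≤ z}) :
    IdentDistrib X Y μ μ := by
  refine ⟨hX.aemeasurable, hY.aemeasurable, Measure.ext_of_Iic _ _ fun z => ?_⟩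
  rw [Measure.map_apply hX measurableSet_Iic, Measure.map_apply hY measurableSet_Iic]
  exact h z

lemma exists_cdf_eq (ν : Measure ℝ) [IsProbabilityMeasure ν] (hν : Continuous (cdf ν))
    {p : ℝ} (hp0 : 0 < p) (hp1 : p < 1) : ∃ a, cdf ν a = p :=
  mem_range_of_exists_le_of_exists_ge hν
    ((tendsto_cdf_atBot ν).eventually (ge_mem_nhds hp0)).exists
    ((tendsto_cdf_atTop ν).eventually (le_mem_nhds hp1)).exists

theorem tendstoInMeasure_empiricalCDF [IsProbabilityMeasure μ] {ζ : ℕ → Ω → ℝ}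
    (hmeas : ∀ t, Measurable (ζ t)) (hindep : Pairwise fun i j => ζ i ⟂ᵢ[μ] ζ j)
    (hident : ∀ t, IdentDistrib (ζ t) (ζ 0) μ μ) (c : ℝ) :
    TendstoInMeasure μ (fun T ω => empiricalCDF T (fun t => ζ t ω) c) atTop
      (fun _ => cdf (μ.map (ζ 0)) c) := by
  have : IsProbabilityMeasure (μ.map (ζ 0)) :=
    Measure.isProbabilityMeasure_map (hmeas 0).aemeasurable
  set g : ℝ → ℝ := fun x => if x ≤ c then 1 else 0
  have hg : Measurable g := Measurable.ite measurableSet_Iic measurable_const measurable_const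
  have hset : MeasurableSet {ω | ζ 0 ω ≤ c} := hmeas 0 measurableSet_Iic
  have hg_indicator : g ∘ ζ 0 = {ω | ζ 0 ω ≤ c}.indicator 1 := by
    ext ω
    simp [g, Set.indicator_apply]
  have hmean : μ[g ∘ ζ 0] = cdf (μ.map (ζ 0)) c := by
    rw [hg_indicator, integral_indicator_one hset, cdf_eq_real,
      map_measureReal_apply (hmeas 0) measurableSet_Iic]
    rfl
  have hslln := strong_law_ae_real (fun t => g ∘ ζ t)
    (hg_indicator ▸ (integrable_const 1).indicator hset)
    (fun i j hij => (hindep hij).comp hg hg) (fun t => (hident t).comp hg)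
  rw [hmean] at hslln
  exact tendstoInMeasure_of_tendsto_ae (fun T => ((measurable_sum _ fun t _ =>
    hg.comp (hmeas t)).div_const _).aestronglyMeasurable) hslln

theorem tendstoInMeasure_empiricalCDF_of_uniform_approx {ζ : ℕ → Ω → ℝ}
    {ζhat : ℕ → ℕ → Ω → ℝ} {G : ℝ → ℝ} {z : ℝ}
    (hlim : ∀ c, TendstoInMeasure μ (fun T ω => empiricalCDF T (fun t => ζ t ω) c) atTop
      (fun _ => G c))
    (happrox : ∀ ε : ℝ, 0 < ε →
      Tendsto (fun T => μ {ω | ∃ t < T, ε < |ζhat T t ω - ζ t ω|}) atTop (𝓝 0))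
    (hG : ContinuousAt G z) :
    TendstoInMeasure μ (fun T ω => empiricalCDF T (fun t => ζhat T t ω) z) atTop
      (fun _ => G z) := by
  simp only [tendstoInMeasure_iff_dist, Real.dist_eq] at hlim ⊢
  intro δ hδ
  obtain ⟨s, hs, hGs⟩ := Metric.continuousAt_iff.1 hG (δ / 2) (half_pos hδ)
  have hGlo : |G (z - s / 2) - G z| < δ / 2 :=
    hGs (by rw [Real.dist_eq, abs_lt]; constructor <;> linarith)
  have hGhi : |G (z + s / 2) - G z| < δ / 2 :=
    hGs (by rw [Real.dist_eq, abs_lt]; constructor <;> linarith)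
  refine tendsto_measure_of_eventually_subset
    (tendsto_measure_union (happrox (s / 2) (half_pos hs))
      (tendsto_measure_union (hlim (z - s / 2) _ (half_pos hδ)) (hlim (z + s / 2) _ (half_pos hδ))))
    (.of_forall fun T ω hω => ?_)
  by_cases hclose : ∀ t < T, |ζhat T t ω - ζ t ω| ≤ s / 2
  swap
  · push Not at hclose
    exact Or.inl hclose
  have hlo : empiricalCDF T (fun t => ζ t ω) (z - s / 2) ≤
      empiricalCDF T (fun t => ζhat T t ω) z :=
    empiricalCDF_le_empiricalCDF fun t ht hζ => by linarith [(abs_le.1 (hclose t ht)).2]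
  have hhi : empiricalCDF T (fun t => ζhat T t ω) z ≤
      empiricalCDF T (fun t => ζ t ω) (z + s / 2) :=
    empiricalCDF_le_empiricalCDF fun t ht hζ => by linarith [(abs_le.1 (hclose t ht)).1]
  rw [abs_lt] at hGlo hGhi
  right
  rcases le_abs'.1 (show δ ≤ |_| from hω) with h | h
  · exact Or.inl (show δ / 2 ≤ |_| from le_abs.2 (Or.inr (by linarith)))
  · exact Or.inr (show δ / 2 ≤ |_| from le_abs.2 (Or.inl (by linarith)))

theorem tendsto_measure_comp_empiricalQuantile_lt {X : ℕ → ℕ → Ω → ℝ} {G : ℝ → ℝ} {p a : ℝ}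
    (hG : Monotone G) (hp : p ≤ 1) (ha : G a < p)
    (hconv : TendstoInMeasure μ (fun T ω => empiricalCDF T (fun t => X T t ω) a) atTop
      (fun _ => G a)) :
    Tendsto (fun T => μ {ω | G (empiricalQuantile T (fun t => X T t ω) p) < G a}) atTop
      (𝓝 0) := by
  simp only [tendstoInMeasure_iff_dist, Real.dist_eq] at hconv
  refine tendsto_measure_of_eventually_subset (hconv (p - G a) (sub_pos.2 ha)) ?_
  filter_upwards [eventually_ne_atTop 0] with T hT ω hω
  have hpa := le_empiricalCDF_of_empiricalQuantile_lt hT hp (hG.reflect_lt hω)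
  exact (sub_le_sub_right hpa _).trans (le_abs_self _)

theorem tendsto_measure_lt_comp_empiricalQuantile {X : ℕ → ℕ → Ω → ℝ} {G : ℝ → ℝ} {p b : ℝ}
    (hG : Monotone G) (hp : 0 < p) (hb : p < G b)
    (hconv : TendstoInMeasure μ (fun T ω => empiricalCDF T (fun t => X T t ω) b) atTop
      (fun _ => G b)) :
    Tendsto (fun T => μ {ω | G b < G (empiricalQuantile T (fun t => X T t ω) p)}) atTop
      (𝓝 0) := by
  simp only [tendstoInMeasure_iff_dist, Real.dist_eq] at hconv
  refine tendsto_measure_of_eventually_subset (hconv (G b - p) (sub_pos.2 hb))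
    (.of_forall fun T ω hω => ?_)
  have hbp := empiricalCDF_lt_of_lt_empiricalQuantile hp (hG.reflect_lt hω)
  exact (sub_le_sub_left hbp.le _).trans (neg_sub (empiricalCDF _ _ b) _ ▸ neg_le_abs _)

end Probability

/-- With `(ζ_t)` i.i.d. with continuous cdf `F`, approximations `ζ̂_t`
with `max_{t<T}|ζ̂_t − ζ_t| = o_p(1)`, and `q̂_α` the empirical `(1−α)`-quantile of
`(ζ̂_t : t < T)` (defined from the empirical cdf `F̃` of the `ζ̂`'s), one has
`F(q̂_α) → 1−α` in probability as `T → ∞`. -/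
theorem stmt_13
    {Ω : Type*} [MeasurableSpace Ω] (ℙ : Measure Ω) [IsProbabilityMeasure ℙ]
    (F : ℝ → ℝ) (hFcont : Continuous F)
    (α : ℝ) (hα : 0 < α) (hα1 : α < 1)
    (ζ : ℕ → Ω → ℝ) (hmeas : ∀ t, Measurable (ζ t))
    (hindep : ProbabilityTheory.iIndepFun ζ ℙ)
    (hcdf : ∀ t (z : ℝ), ℙ {ω | ζ t ω ≤ z} = ENNReal.ofReal (F z))
    (ζhat : ℕ → ℕ → Ω → ℝ)
    (hconsist : ∀ ε : ℝ, 0 < ε →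
      Tendsto (fun T => ℙ {ω | ∃ t < T, ε < |ζhat T t ω - ζ t ω|}) atTop (nhds 0))
    -- the empirical cdf of the approximations and its (1−α)-quantile
    (Ftilde : ℕ → Ω → ℝ → ℝ)
    (hFtilde : ∀ T ω z, Ftilde T ω z =
      (∑ t ∈ range T, if ζhat T t ω ≤ z then (1:ℝ) else 0) / T)
    (qhat : ℕ → Ω → ℝ)
    (hqhat : ∀ T ω, qhat T ω = sInf {z : ℝ | 1 - α ≤ Ftilde T ω z}) :
    ∀ ε : ℝ, 0 < ε →
      Tendsto (fun T => ℙ {ω | ε < |F (qhat T ω) - (1 - α)|}) atTop (nhds 0) := by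
  intro ε hε
  have : IsProbabilityMeasure (ℙ.map (ζ 0)) :=
    Measure.isProbabilityMeasure_map (hmeas 0).aemeasurable
  set G := ProbabilityTheory.cdf (ℙ.map (ζ 0))
  -- `hcdf` only pins `F` down where it is nonnegative
  have hGF z : G z = max (F z) 0 := by
    rw [ProbabilityTheory.cdf_eq_real, map_measureReal_apply (hmeas 0) measurableSet_Iic,
      measureReal_def]
    exact (congrArg ENNReal.toReal (hcdf 0 z)).trans ENNReal.toReal_ofReal'
  have hGcont : Continuous G := funext hGF ▸ hFcont.max continuous_const
  have hident t : ProbabilityTheory.IdentDistrib (ζ t) (ζ 0) ℙ ℙ :=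
    identDistrib_of_measure_setOf_le_eq (hmeas t) (hmeas 0) fun z =>
      (hcdf t z).trans (hcdf 0 z).symm
  have hlim z : TendstoInMeasure ℙ (fun T ω => empiricalCDF T (fun t => ζhat T t ω) z) atTop
      (fun _ => G z) :=
    tendstoInMeasure_empiricalCDF_of_uniform_approx
      (tendstoInMeasure_empiricalCDF hmeas (fun _ _ hij => hindep.indepFun hij) hident) hconsist
      hGcont.continuousAt
  have hq T ω : qhat T ω = empiricalQuantile T (fun t => ζhat T t ω) (1 - α) := by
    simp only [hqhat, hFtilde, empiricalQuantile, empiricalCDF]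
  -- levels in `(0, 1)` on either side of `1 - α`, no farther from it than `ε`
  obtain ⟨a, ha⟩ := exists_cdf_eq _ hGcont (p := max (1 - α - ε) ((1 - α) / 2))
    (lt_max_of_lt_right (by linarith)) (max_lt (by linarith) (by linarith))
  obtain ⟨b, hb⟩ := exists_cdf_eq _ hGcont (p := min (1 - α + ε) (1 - α / 2))
    (lt_min (by linarith) (by linarith)) (min_lt_of_right_lt (by linarith))
  refine tendsto_measure_of_eventually_subset (tendsto_measure_union
    (tendsto_measure_comp_empiricalQuantile_lt (p := 1 - α) G.mono (by linarith)
      (by rw [ha]; exact max_lt (by linarith) (by linarith)) (hlim a))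
    (tendsto_measure_lt_comp_empiricalQuantile (p := 1 - α) G.mono (by linarith)
      (by rw [hb]; exact lt_min (by linarith) (by linarith)) (hlim b)))
    (.of_forall fun T ω hω => ?_)
  have hGq : G (empiricalQuantile T (fun t => ζhat T t ω) (1 - α)) = max (F (qhat T ω)) 0 :=
    hq T ω ▸ hGF _
  rcases lt_abs.1 (show ε < |_| from hω) with hhigh | hlow
  · refine Or.inr (show G b < _ from ?_)
    rw [hGq, hb]
    exact (min_le_left _ _).trans_lt (lt_max_of_lt_left (by linarith))
  · refine Or.inl (show _ < G a from ?_)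
    rw [hGq, ha]
    exact max_lt (lt_max_of_lt_left (by linarith)) (lt_max_of_lt_right (by linarith))
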